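/- arXiv:1210.2377 — 6 statements merged into one kernel-verified Lean document; each statement's English description precedes it below -/
import Mathlib

section
/- With notation as in the previous context (e = aH - Σbᵢeᵢ, a > 0, bᵢ ≥ 0, e·e + K·e ≥ -2), the class e pairs nonnegatively with each of the classes H, 2H, nH - (n-1)Eᵢ, nH - (n-1)Eᵢ - E_j (i ≠ j, n ≥ 1), and H - Eᵢ. -/
/-- In the lattice for ℂP²#kℂP²‾ (k ≥ 2) with e = aH - Σᵢ bᵢEᵢ, a > 0, bᵢ ≥ 0
and adjunction a² - 3a - Σᵢ(bᵢ² - bᵢ) ≥ -2, the class e pairs nonnegatively with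
H, 2H, nH - (n-1)Eᵢ, nH - (n-1)Eᵢ - E_j (i ≠ j, n ≥ 1), and H - Eᵢ.
Here e·H = a, e·Eᵢ = bᵢ. -/
theorem stmt_5 (k : ℕ) (hk : 2 ≤ k) (a : ℤ) (b : Fin k → ℤ)
    (ha : 0 < a) (hb : ∀ i, 0 ≤ b i)
    (hadj : -2 ≤ a ^ 2 - 3 * a - ∑ i, (b i ^ 2 - b i)) :
    0 ≤ a ∧ 0 ≤ 2 * a ∧
    (∀ n : ℤ, 1 ≤ n → ∀ i, 0 ≤ n * a - (n - 1) * b i) ∧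
    (∀ n : ℤ, 1 ≤ n → ∀ i j, i ≠ j → 0 ≤ n * a - (n - 1) * b i - b j) ∧
    (∀ i, 0 ≤ a - b i) := by
  have hterm : ∀ i, 0 ≤ b i ^ 2 - b i := by
    intro i
    rcases (hb i).eq_or_lt with h | h
    · simp [← h]
    · nlinarith [h]
  have hsum : ∀ i, b i ^ 2 - b i ≤ ∑ j, (b j ^ 2 - b j) := by
    intro i
    exact Finset.single_le_sum (fun j _ => hterm j) (Finset.mem_univ i)
  have hba : ∀ i, b i ≤ a := by
    intro i
    by_contra h
    push_neg at h
    have h1 : a + 1 ≤ b i := h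
    nlinarith [hsum i, hterm i]
  refine ⟨ha.le, by linarith, ?_, ?_, fun i => by linarith [hba i]⟩
  · intro n hn i
    nlinarith [hba i, hb i]
  · intro n hn i j _
    nlinarith [hba i, hba j, hb i]
end

section
/- Let e = aH - Σᵢbᵢeᵢ with a > 0, bᵢ ≥ 0 integers and a² - 3a - Σᵢ(bᵢ² - bᵢ) ≥ -2 (adjunction). If e·(2H - E₁) < 0, i.e. 2a < b₁, then a contradiction follows; hence e·(2H - Eᵢ) ≥ 0 for every i. -/
/-- In the lattice for ℂP²#kℂP²‾, with e = aH - Σᵢ bᵢEᵢ, a > 0, bᵢ ≥ 0 and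
adjunction a² - 3a - Σᵢ(bᵢ² - bᵢ) ≥ -2: assuming e·(2H - Eᵢ) < 0, i.e.
2a < bᵢ, leads to a contradiction; hence e·(2H - Eᵢ) = 2a - bᵢ ≥ 0 for all i. -/
theorem stmt_6 (k : ℕ) (a : ℤ) (b : Fin k → ℤ)
    (ha : 0 < a) (hb : ∀ i, 0 ≤ b i)
    (hadj : -2 ≤ a ^ 2 - 3 * a - ∑ i, (b i ^ 2 - b i)) :
    (∀ i, 2 * a < b i → False) ∧ (∀ i, 0 ≤ 2 * a - b i) := by
  have hterm : ∀ j, 0 ≤ b j ^ 2 - b j := by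
    intro j
    have h := hb j
    have : b j = 0 ∨ 1 ≤ b j := by omega
    rcases this with h1 | h1 <;> nlinarith
  have key : ∀ i, 2 * a < b i → False := by
    intro i h
    have hsum : b i ^ 2 - b i ≤ ∑ j, (b j ^ 2 - b j) :=
      Finset.single_le_sum (fun j _ => hterm j) (Finset.mem_univ i)
    nlinarith [sq_nonneg (b i - 2 * a - 1), mul_pos ha ha]
  exact ⟨key, fun i => by by_contra h; exact key i (by omega)⟩
end

section
/- In the lattice for ℂP²#kℂP²‾ (k ≥ 1), if a class e has g(e) = 0 and e·e > 0 (i.e. e ∈ S⁺_K), and f is a class with f·f ≥ 0, g(f) = 0 (f ∈ S^{≥0}_K), and both pair positively with a common positive-square class, then e·f > 0. -/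
/-- Intersection pairing on the lattice ℤ^{k+1} for ℂP²#kℂP²‾ with orthogonal
basis H, E₁,…,E_k, H² = 1, Eᵢ² = -1.  A class aH + Σᵢ cᵢEᵢ is encoded as (a, c). -/
def QCP (k : ℕ) (e f : ℤ × (Fin k → ℤ)) : ℤ := e.1 * f.1 - ∑ i, e.2 i * f.2 i

/-- The canonical class K = -3H + E₁ + ⋯ + E_k. -/
def KCP (k : ℕ) : ℤ × (Fin k → ℤ) := (-3, fun _ => 1)

lemma key_sq (k : ℕ) (u v : ℤ × (Fin k → ℤ))
    (hu : 0 < QCP k u u) (hv : 0 ≤ QCP k v v) (hv1 : v.1 ≠ 0) :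
    (∑ i, u.2 i * v.2 i) ^ 2 < (u.1 * v.1) ^ 2 := by
  have cs := Finset.sum_mul_sq_le_sq_mul_sq Finset.univ u.2 v.2
  have hA : (0:ℤ) ≤ ∑ i, u.2 i ^ 2 := Finset.sum_nonneg fun i _ => sq_nonneg _
  have hu' : ∑ i, u.2 i ^ 2 < u.1 ^ 2 := by
    have := hu; unfold QCP at this
    simp only [← sq] at this ⊢; linarith
  have hv' : ∑ i, v.2 i ^ 2 ≤ v.1 ^ 2 := by
    have := hv; unfold QCP at this
    simp only [← sq] at this ⊢; linarith
  have hv2 : (0:ℤ) < v.1 ^ 2 := by positivity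
  calc (∑ i, u.2 i * v.2 i) ^ 2 ≤ (∑ i, u.2 i ^ 2) * ∑ i, v.2 i ^ 2 := cs
    _ < u.1 ^ 2 * v.1 ^ 2 := by nlinarith
    _ = (u.1 * v.1) ^ 2 := (mul_pow ..).symm

/-- Sign transfer: under the hypotheses, `Q u v` has the sign of `u.1 * v.1`. -/
lemma key_sign (k : ℕ) (u v : ℤ × (Fin k → ℤ))
    (hu : 0 < QCP k u u) (hv : 0 ≤ QCP k v v) (hv1 : v.1 ≠ 0) :
    (0 < QCP k u v ↔ 0 < u.1 * v.1) := by
  have h := key_sq k u v hu hv hv1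
  have habs : |∑ i, u.2 i * v.2 i| < |u.1 * v.1| := by
    have h' := h
    rw [← sq_abs (∑ i, u.2 i * v.2 i), ← sq_abs (u.1 * v.1)] at h'
    exact lt_of_pow_lt_pow_left₀ 2 (abs_nonneg _) h'
  unfold QCP
  rcases abs_lt.mp habs with ⟨h1, h2⟩
  rcases le_or_gt (u.1 * v.1) 0 with h0 | h0
  · constructor
    · intro hq
      rcases abs_cases (u.1*v.1) with ⟨ha, _⟩ | ⟨ha, _⟩ <;> linarith
    · intro; linarith
  · constructor
    · intro; exact h0
    · intro
      rcases abs_cases (u.1*v.1) with ⟨ha, _⟩ | ⟨ha, _⟩ <;> linarith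

/-- If e ∈ S⁺_K (genus 0, positive square), f ∈ S^{≥0}_K (genus 0, nonnegative
square), and both pair positively with a common positive-square class ω,
then e·f > 0. -/
theorem stmt_10 (k : ℕ) (hk : 1 ≤ k) (e f ω : ℤ × (Fin k → ℤ))
    (hee : 0 < QCP k e e)
    (hge : (QCP k e e + QCP k (KCP k) e) / 2 + 1 = 0)
    (hff : 0 ≤ QCP k f f)
    (hgf : (QCP k f f + QCP k (KCP k) f) / 2 + 1 = 0)
    (hωω : 0 < QCP k ω ω) (hωe : 0 < QCP k ω e) (hωf : 0 < QCP k ω f) :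
    0 < QCP k e f := by
  -- positive square classes have nonzero first coordinate
  have hpos1 : ∀ u : ℤ × (Fin k → ℤ), 0 < QCP k u u → u.1 ≠ 0 := by
    intro u hu h0
    unfold QCP at hu
    have : (0:ℤ) ≤ ∑ i, u.2 i * u.2 i :=
      Finset.sum_nonneg fun i _ => mul_self_nonneg _
    rw [h0] at hu; simp at hu; linarith
  have he1 : e.1 ≠ 0 := hpos1 e hee
  have hω1 : ω.1 ≠ 0 := hpos1 ω hωω
  -- f.1 ≠ 0, using the genus condition to rule out f = 0
  have hf1 : f.1 ≠ 0 := by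
    intro h0
    have hsum : ∑ i, f.2 i * f.2 i = 0 := by
      have := hff; unfold QCP at this; rw [h0] at this
      have h2 : (0:ℤ) ≤ ∑ i, f.2 i * f.2 i :=
        Finset.sum_nonneg fun i _ => mul_self_nonneg _
      simp at this; linarith
    have hzero : ∀ i, f.2 i = 0 := by
      intro i
      have := (Finset.sum_eq_zero_iff_of_nonneg
        (fun i _ => mul_self_nonneg (f.2 i))).mp hsum i (Finset.mem_univ i)
      nlinarith [this]
    have hQff : QCP k f f = 0 := by
      unfold QCP; rw [h0]; simp [hzero]
    have hQKf : QCP k (KCP k) f = 0 := by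
      unfold QCP KCP; rw [h0]; simp [hzero]
    rw [hQff, hQKf] at hgf; norm_num at hgf
  have h1 := (key_sign k ω e hωω hee.le he1).mp hωe
  have h2 := (key_sign k ω f hωω hff hf1).mp hωf
  refine (key_sign k e f hee hff hf1).mpr ?_
  -- sign of e.1 = sign of ω.1 = sign of f.1
  rcases lt_or_gt_of_ne hω1 with h | h
  · have he : e.1 < 0 := by nlinarith
    have hf : f.1 < 0 := by nlinarith
    exact mul_pos_of_neg_of_neg he hf
  · have he : 0 < e.1 := by nlinarith
    have hf : 0 < f.1 := by nlinarith
    exact mul_pos he hf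
end

section
/- Let e₁,…,e_n be classes in the lattice of a 4-manifold with b⁺=1 and m₁,…,m_n positive integers with e = Σ mᵢeᵢ, where each g(eᵢ) = 0, g(e) = 0, e is nef (e·eᵢ ≥ 0 for all i), and connectivity holds in the sense that eⱼ·(e - mⱼeⱼ) ≥ 1 for each j with eⱼ·eⱼ ≥ 0 (setting l_f = max(ι_f, 0) with ι_f = (f·f - K·f)/2). If n ≥ 2 and e₁·e₁ < 0 with e·e₁ > 0, then Σⱼ₌₂ⁿ l_{eⱼ} ≤ l_e - 2 where l_e = e·e + 1. -/
/-- The key estimate (3terms) in Proposition 5.3: with K the canonical class,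
g(f) = (f·f + K·f)/2 + 1, ι(f) = (f·f - K·f)/2, l_f = max(ι(f), 0), suppose
e = Σᵢ mᵢeᵢ (n ≥ 2, mᵢ ≥ 1) with g(eᵢ) = 0 for all i, g(e) = 0, e·eᵢ ≥ 0 for
all i (nefness), eⱼ·(e - mⱼeⱼ) ≥ 1 for every j ≠ 1 with eⱼ·eⱼ ≥ 0
(connectedness), e₁·e₁ < 0 and e·e₁ ≥ 1.  Then Σ_{j≥2} l_{eⱼ} ≤ l_e - 2,
where l_e = e·e + 1. -/
theorem stmt_12 (M : Type*) [AddCommGroup M] [Module ℤ M]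
    (B : M →ₗ[ℤ] M →ₗ[ℤ] ℤ) (hB : ∀ x y, B x y = B y x) (K : M)
    (n : ℕ) [NeZero n] (hn : 2 ≤ n) (E : Fin n → M) (m : Fin n → ℤ)
    (hm : ∀ i, 1 ≤ m i)
    (e : M) (he : e = ∑ i, m i • E i)
    (hgE : ∀ i, B (E i) (E i) + B K (E i) + 2 = 0)
    (hge : B e e + B K e + 2 = 0)
    (hnef : ∀ i, 0 ≤ B e (E i))
    (hconn : ∀ j, j ≠ 0 → 0 ≤ B (E j) (E j) → 1 ≤ B (E j) (e - m j • E j))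
    (hneg : B (E 0) (E 0) < 0) (hpos : 1 ≤ B e (E 0)) :
    ∑ j ∈ Finset.univ.filter (fun j => j ≠ (0 : Fin n)),
        max ((B (E j) (E j) - B K (E j)) / 2) 0 ≤ (B e e + 1) - 2 := by

  have hsum : ∀ j, max ((B (E j) (E j) - B K (E j)) / 2) 0 = max (B (E j) (E j) + 1) 0 := by
    intro j
    have h2 : B (E j) (E j) - B K (E j) = 2 * (B (E j) (E j) + 1) := by
      have := hgE j; ring_nf; linarith
    rw [h2, Int.mul_ediv_cancel_left _ (by norm_num)]
  simp only [hsum]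
  have hee : B e e = ∑ i, m i * B e (E i) := by
    nth_rewrite 2 [he]
    rw [map_sum]
    simp [smul_eq_mul]
  have hterm : ∀ j ∈ Finset.univ.filter (fun j => j ≠ (0 : Fin n)),
      max (B (E j) (E j) + 1) 0 ≤ m j * B e (E j) := by
    intro j hj
    simp only [Finset.mem_filter] at hj
    have hmj := hm j
    have hnj := hnef j
    have hrhs0 : (0:ℤ) ≤ m j * B e (E j) := mul_nonneg (by linarith) hnj
    rcases le_or_gt 0 (B (E j) (E j)) with hc | hc
    · have h1 := hconn j hj.2 hc
      have hx : B (E j) (e - m j • E j) = B e (E j) - m j * B (E j) (E j) := by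
        simp [map_sub, hB (E j) e, smul_eq_mul]
      rw [hx] at h1
      refine max_le ?_ hrhs0
      nlinarith [sq_nonneg (m j - 1)]
    · have : max (B (E j) (E j) + 1) 0 = 0 := max_eq_right (by omega)
      rw [this]; exact hrhs0
  have hsplit : ∑ i, m i * B e (E i)
      = m 0 * B e (E 0) + ∑ j ∈ Finset.univ.filter (fun j => j ≠ (0 : Fin n)), m j * B e (E j) := by
    rw [← Finset.sum_filter_add_sum_filter_not Finset.univ (fun j => j = (0 : Fin n))]
    congr 1
    simp [Finset.filter_eq']
  have h0 : (1:ℤ) ≤ m 0 * B e (E 0) := by nlinarith [hm 0]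
  have hle := Finset.sum_le_sum hterm
  rw [hee] at *
  linarith [hsplit]
end

section
/- Suppose e ∈ ℰ_k (e·e = -1, K·e = -1) has nonzero E_k-coefficient, i.e. c := e·E_k > 0, and u lies in the span of H, E₁,…,E_{k-1} with u·u > 0 and u pairing positively with some fixed symplectic class ω that also pairs positively with e + cE_k. Then u·e = u·(e + cE_k) > 0. -/
/-- The last exceptional basis class E_{k+1}. -/
def Elast (k : ℕ) : ℤ × (Fin (k + 1) → ℤ) :=
  (0, fun i => if i = Fin.last k then 1 else 0)

/-- The canonical class K = -3H + E₁ + ⋯ + E_{k+1}. -/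
def Kfull (k : ℕ) : ℤ × (Fin (k + 1) → ℤ) := (-3, fun _ => 1)

lemma sum_ite_last (k : ℕ) (f : Fin (k+1) → ℤ) (c : ℤ) :
    ∑ i, f i * (if i = Fin.last k then c else 0) = f (Fin.last k) * c := by
  simp [mul_ite]

lemma pos_of_sq (s t : ℤ) (h1 : s^2 < t^2) (h2 : s < t) : 0 < t := by
  nlinarith [sq_nonneg (s+t), sq_nonneg (s-t)]

lemma lightcone {n : ℕ} (a b p : ℤ) (x y z : Fin n → ℤ)
    (hx : ∑ i, x i * x i < a^2) (hy : ∑ i, y i * y i ≤ b^2)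
    (hz : ∑ i, z i * z i < p^2)
    (hpa : 0 < p * a - ∑ i, z i * x i) (hpb : 0 < p * b - ∑ i, z i * y i) :
    0 < a * b - ∑ i, x i * y i := by
  have hX : (0:ℤ) ≤ ∑ i, x i * x i := Finset.sum_nonneg fun i _ => mul_self_nonneg _
  have hY : (0:ℤ) ≤ ∑ i, y i * y i := Finset.sum_nonneg fun i _ => mul_self_nonneg _
  have hZ : (0:ℤ) ≤ ∑ i, z i * z i := Finset.sum_nonneg fun i _ => mul_self_nonneg _
  have sq_eq : ∀ f : Fin n → ℤ, ∑ i, f i ^ 2 = ∑ i, f i * f i := by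
    intro f; refine Finset.sum_congr rfl fun i _ => sq (f i)
  have csxy := Finset.sum_mul_sq_le_sq_mul_sq Finset.univ x y
  have cszx := Finset.sum_mul_sq_le_sq_mul_sq Finset.univ z x
  have cszy := Finset.sum_mul_sq_le_sq_mul_sq Finset.univ z y
  rw [sq_eq x, sq_eq y] at csxy
  rw [sq_eq z, sq_eq x] at cszx
  rw [sq_eq z, sq_eq y] at cszy
  have hb : b ≠ 0 := by
    rintro rfl
    have hy0 : ∑ i, y i * y i = 0 := le_antisymm (by simpa using hy) hY
    have h0 : ∀ i ∈ Finset.univ, y i * y i = 0 :=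
      (Finset.sum_eq_zero_iff_of_nonneg fun i _ => mul_self_nonneg _).mp hy0
    have hzy : ∑ i : Fin n, z i * y i = 0 := by
      refine Finset.sum_eq_zero fun i hi => ?_
      have := mul_self_eq_zero.mp (h0 i hi)
      simp [this]
    rw [hzy] at hpb
    simp at hpb
  have hb2 : 0 < b^2 := by positivity
  have ha2 : 0 < a^2 := lt_of_le_of_lt hX hx
  have hp2 : 0 < p^2 := lt_of_le_of_lt hZ hz
  have hzx2 : (∑ i, z i * x i)^2 < (p*a)^2 := by
    calc (∑ i, z i * x i)^2 ≤ (∑ i, z i * z i) * (∑ i, x i * x i) := cszx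
    _ < p^2 * a^2 := by
        rcases lt_or_eq_of_le hX with h | h
        · exact mul_lt_mul'' hz hx hZ hX
        · rw [← h, mul_zero]; positivity
    _ = (p*a)^2 := by ring
  have hzy2 : (∑ i, z i * y i)^2 < (p*b)^2 := by
    calc (∑ i, z i * y i)^2 ≤ (∑ i, z i * z i) * (∑ i, y i * y i) := cszy
    _ < p^2 * b^2 := by nlinarith
    _ = (p*b)^2 := by ring
  have hxy2 : (∑ i, x i * y i)^2 < (a*b)^2 := by
    calc (∑ i, x i * y i)^2 ≤ (∑ i, x i * x i) * (∑ i, y i * y i) := csxy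
    _ < a^2 * b^2 := by nlinarith
    _ = (a*b)^2 := by ring
  have hpa' : 0 < p * a := pos_of_sq _ _ hzx2 (by linarith)
  have hpb' : 0 < p * b := pos_of_sq _ _ hzy2 (by linarith)
  have hab : 0 < a * b := by nlinarith
  nlinarith [hxy2, hab]

/-- If e is exceptional (e² = -1, K·e = -1) with c := e·E_{last} > 0, and u lies
in the span of H, E₁,…,E_k with u² > 0, and a symplectic class ω (ω² > 0) pairs
positively with both u and e + c·E_{last}, then u·e = u·(e + c·E_{last}) > 0. -/
theorem stmt_17 (k : ℕ) (e u ω : ℤ × (Fin (k + 1) → ℤ))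
    (hee : QCP (k + 1) e e = -1) (hKe : QCP (k + 1) (Kfull k) e = -1)
    (hc : 0 < QCP (k + 1) e (Elast k))
    (hu : u.2 (Fin.last k) = 0) (huu : 0 < QCP (k + 1) u u)
    (hωω : 0 < QCP (k + 1) ω ω) (hωu : 0 < QCP (k + 1) ω u)
    (hωe : 0 < QCP (k + 1) ω (e + QCP (k + 1) e (Elast k) • Elast k)) :
    QCP (k + 1) u e = QCP (k + 1) u (e + QCP (k + 1) e (Elast k) • Elast k) ∧
    0 < QCP (k + 1) u e := by
  set c : ℤ := QCP (k+1) e (Elast k) with hcdef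
  have hcval : c = -(e.2 (Fin.last k)) := by
    rw [hcdef]; simp [QCP, Elast, sum_ite_last]
  set v := e + c • Elast k with hvdef
  have hv1 : v.1 = e.1 := by simp [hvdef, Elast]
  have hv2 : ∀ i, v.2 i = e.2 i + c * (if i = Fin.last k then 1 else 0) := by
    intro i; simp [hvdef, Elast, mul_comm]
  have hsum : ∀ w : Fin (k+1) → ℤ,
      ∑ i, w i * v.2 i = (∑ i, w i * e.2 i) + w (Fin.last k) * c := by
    intro w
    have h1 : ∀ i ∈ Finset.univ, w i * v.2 i
        = w i * e.2 i + (w i * c) * (if i = Fin.last k then (1:ℤ) else 0) := by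
      intro i _; rw [hv2 i]; ring
    rw [Finset.sum_congr rfl h1, Finset.sum_add_distrib, sum_ite_last, mul_one]
  have hQuv : QCP (k+1) u v = QCP (k+1) u e := by
    simp only [QCP, hv1, hsum u.2, hu]; ring
  have hvlast : v.2 (Fin.last k) = 0 := by rw [hv2]; simp [hcval]
  have hvv : ∑ i, v.2 i * v.2 i = (∑ i, e.2 i * e.2 i) - c * c := by
    rw [hsum v.2, hvlast]
    have h2 : ∀ i ∈ Finset.univ, v.2 i * e.2 i = e.2 i * v.2 i := fun i _ => mul_comm _ _
    rw [Finset.sum_congr rfl h2, hsum e.2, hcval]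
    ring
  have hc1 : 1 ≤ c := hc
  -- hypotheses for lightcone
  have hx : ∑ i, u.2 i * u.2 i < u.1^2 := by
    have := huu; simp only [QCP] at this; nlinarith
  have hy : ∑ i, v.2 i * v.2 i ≤ e.1^2 := by
    simp only [QCP] at hee
    rw [hvv]; nlinarith
  have hz : ∑ i, ω.2 i * ω.2 i < ω.1^2 := by
    have := hωω; simp only [QCP] at this; nlinarith
  have hpa : 0 < ω.1 * u.1 - ∑ i, ω.2 i * u.2 i := by
    have := hωu; simp only [QCP] at this; linarith
  have hpb : 0 < ω.1 * e.1 - ∑ i, ω.2 i * v.2 i := by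
    have h := hωe
    simp only [QCP, hv1] at h
    linarith
  have key := lightcone u.1 e.1 ω.1 u.2 v.2 ω.2 hx hy hz hpa hpb
  have hfin : 0 < QCP (k+1) u e := by
    rw [← hQuv]; simp only [QCP, hv1]; linarith
  exact ⟨hQuv.symm, hfin⟩
end

section
/- Let e₁,…,e_n be classes with g(eᵢ) = 0 and m₁,…,m_n ≥ 1 integers such that e = Σmᵢeᵢ satisfies g(e) = 0 and e·eᵢ ≥ 0 for all i (nefness). Suppose further eⱼ·(e - mⱼeⱼ) ≥ 1 for every j (connectedness). Then Σᵢ mᵢ·l_{eᵢ} ≤ l_e - 1, where l_f = max((f·f - K·f)/2, 0) and l_e = e·e + 1. -/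
/-- Proposition 4.2 (inequality (red-dim')) as lattice arithmetic: with K the
canonical class, g(f) = (f·f + K·f)/2 + 1, ι(f) = (f·f - K·f)/2 and
l_f = max(ι(f), 0), suppose e = Σᵢ mᵢeᵢ with mᵢ ≥ 1, g(eᵢ) = 0 for all i,
g(e) = 0, e·eᵢ ≥ 0 for all i (nefness) and eⱼ·(e - mⱼeⱼ) ≥ 1 for every j
(connectedness).  Then Σᵢ mᵢ·l_{eᵢ} ≤ l_e - 1, where l_e = e·e + 1. -/
theorem stmt_19 (M : Type*) [AddCommGroup M] [Module ℤ M]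
    (B : M →ₗ[ℤ] M →ₗ[ℤ] ℤ) (hB : ∀ x y, B x y = B y x) (K : M)
    (n : ℕ) (E : Fin n → M) (m : Fin n → ℤ) (hm : ∀ i, 1 ≤ m i)
    (e : M) (he : e = ∑ i, m i • E i)
    (hgE : ∀ i, B (E i) (E i) + B K (E i) + 2 = 0)
    (hge : B e e + B K e + 2 = 0)
    (hnef : ∀ i, 0 ≤ B e (E i))
    (hconn : ∀ j, 1 ≤ B (E j) (e - m j • E j)) :
    ∑ i, m i * max ((B (E i) (E i) - B K (E i)) / 2) 0 ≤ (B e e + 1) - 1 := by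
  have hι : ∀ i, (B (E i) (E i) - B K (E i)) / 2 = B (E i) (E i) + 1 := by
    intro i
    have := hgE i
    omega
  have hee : B e e = ∑ i, m i * B e (E i) := by
    nth_rewrite 2 [he]
    simp [map_sum, map_smul, smul_eq_mul]
  have hterm : ∀ i, m i * max (B (E i) (E i) + 1) 0 ≤ m i * B e (E i) := by
    intro i
    have h1 := hconn i
    rw [map_sub, hB (E i) e] at h1
    have h2 : (B (E i)) (m i • E i) = m i * B (E i) (E i) := by
      simp
    rw [h2] at h1
    have hmi := hm i
    rcases le_or_gt 0 (B (E i) (E i)) with h | h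
    · rw [max_eq_left (by linarith)]
      have : B (E i) (E i) + 1 ≤ B e (E i) := by nlinarith
      exact mul_le_mul_of_nonneg_left this (by linarith)
    · rw [max_eq_right (by omega)]
      have := hnef i
      nlinarith
  calc ∑ i, m i * max ((B (E i) (E i) - B K (E i)) / 2) 0
      = ∑ i, m i * max (B (E i) (E i) + 1) 0 := by
        simp_rw [hι]
    _ ≤ ∑ i, m i * B e (E i) := Finset.sum_le_sum fun i _ => hterm i
    _ = (B e e + 1) - 1 := by rw [hee]; ring
end
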